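/- Let q be a probability distribution on a finite set J and let (ρ_j)_{j∈J} be density matrices on a finite-dimensional complex Hilbert space A. Consider the classical-quantum state ρ^{AB} = ∑_j q_j·ρ_j ⊗ |j⟩⟨j| on A ⊗ ℂ^J, where |j⟩⟨j| is the diagonal matrix unit at j. Then H_min(A|B)_ρ ≥ min_j H_min(ρ_j). -/

import Mathlib

open scoped BigOperators ComplexOrder
open Kronecker

noncomputable section

/-- A probability distribution on a finite type. -/
def IsProbDist {I : Type*} [Fintype I] (p : I → ℝ) : Prop :=
  (∀ i, 0 ≤ p i) ∧ ∑ i, p i = 1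

/-- Conditional min-entropy (base 2) of a bipartite state `ρAB` on `A ⊗ B`:
`−log min{ λ ≥ 0 : ∃ density matrix σ on B, λ(1_A ⊗ σ) − ρAB is PSD }`. -/
def condHminMat {A B : Type} [Fintype A] [DecidableEq A] [Fintype B] [DecidableEq B]
    (ρAB : Matrix (A × B) (A × B) ℂ) : ℝ :=
  - Real.logb 2 (sInf { l : ℝ | 0 ≤ l ∧ ∃ σ : Matrix B B ℂ, σ.PosSemidef ∧ σ.trace = 1 ∧
      (l • ((1 : Matrix A A ℂ) ⊗ₖ σ) - ρAB).PosSemidef })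

/-!
Let `M` be the largest eigenvalue of all the `ρ_j`. With `σ = diag(q)` one has
`M (1 ⊗ σ) − ρ^{AB} = ∑_j q_j (M·1 − ρ_j) ⊗ |j⟩⟨j| ⪰ 0`, so `M` is feasible for the
minimisation defining `H_min(A|B)`, whence `H_min(A|B) ≥ −log M = min_j H_min(ρ_j)`.
Taking traces shows that every feasible `λ` satisfies `λ · dim A ≥ tr ρ^{AB} = 1`, so the
minimum is positive and `−log` is applied where it is antitone.
-/

open Matrix

lemma IsProbDist.nonempty {I : Type*} [Fintype I] {p : I → ℝ} (hp : IsProbDist p) :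
    Nonempty I :=
  Finset.univ_nonempty_iff.mp <| Finset.nonempty_of_sum_ne_zero <| hp.2 ▸ one_ne_zero

lemma Matrix.IsHermitian.posSemidef_smul_one_sub {𝕜 n : Type*} [RCLike 𝕜] [Fintype n]
    [DecidableEq n] {A : Matrix n n 𝕜} (hA : A.IsHermitian) {l : ℝ}
    (h : ∀ i, hA.eigenvalues i ≤ l) : (l • (1 : Matrix n n 𝕜) - A).PosSemidef := by
  open scoped MatrixOrder in
  have hle : A ≤ algebraMap ℝ (Matrix n n 𝕜) l :=
    le_algebraMap_of_spectrum_le (by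
      rw [hA.spectrum_real_eq_range_eigenvalues]
      rintro _ ⟨i, rfl⟩
      exact h i) hA.isSelfAdjoint
  rwa [Algebra.algebraMap_eq_smul_one] at hle

lemma Matrix.posSemidef_single_one {R n : Type*} [CommRing R] [PartialOrder R] [StarRing R]
    [StarOrderedRing R] [DecidableEq n] (j : n) : (single j j (1 : R)).PosSemidef := by
  rw [← diagonal_single]
  exact .diagonal (Pi.single_nonneg.2 zero_le_one)

section CondMinEntropy

variable {A B : Type} [Fintype A] [DecidableEq A] [Fintype B]

def condHminFeasible (ρAB : Matrix (A × B) (A × B) ℂ) : Set ℝ :=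
  { l : ℝ | 0 ≤ l ∧ ∃ σ : Matrix B B ℂ, σ.PosSemidef ∧ σ.trace = 1 ∧
      (l • ((1 : Matrix A A ℂ) ⊗ₖ σ) - ρAB).PosSemidef }

lemma condHminMat_eq_neg_logb_sInf [DecidableEq B] (ρAB : Matrix (A × B) (A × B) ℂ) :
    condHminMat ρAB = -Real.logb 2 (sInf (condHminFeasible ρAB)) :=
  rfl

lemma one_le_mul_card_of_mem_condHminFeasible {ρAB : Matrix (A × B) (A × B) ℂ}
    (htr : ρAB.trace = 1) {l : ℝ} (hl : l ∈ condHminFeasible ρAB) :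
    1 ≤ l * Fintype.card A := by
  obtain ⟨-, σ, -, hσtr, hpsd⟩ := hl
  have h := hpsd.trace_nonneg
  rw [trace_sub, trace_smul, trace_kronecker, trace_one, hσtr, htr, sub_nonneg] at h
  exact_mod_cast (show ((1 : ℝ) : ℂ) ≤ ((l * Fintype.card A : ℝ) : ℂ) by simpa using h)

lemma neg_logb_le_condHminMat [DecidableEq B] {ρAB : Matrix (A × B) (A × B) ℂ}
    (htr : ρAB.trace = 1) {l : ℝ} (hl : l ∈ condHminFeasible ρAB) :
    -Real.logb 2 l ≤ condHminMat ρAB := by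
  have hcard : (0 : ℝ) < Fintype.card A :=
    pos_of_mul_pos_right (one_pos.trans_le (one_le_mul_card_of_mem_condHminFeasible htr hl)) hl.1
  have hbound (l' : ℝ) (hl' : l' ∈ condHminFeasible ρAB) : 1 / Fintype.card A ≤ l' := by
    rw [div_le_iff₀ hcard]
    exact one_le_mul_card_of_mem_condHminFeasible htr hl'
  have hpos : 0 < sInf (condHminFeasible ρAB) :=
    (one_div_pos.2 hcard).trans_le (le_csInf ⟨l, hl⟩ hbound)
  have hle : sInf (condHminFeasible ρAB) ≤ l := csInf_le ⟨0, fun _ h => h.1⟩ hl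
  rw [condHminMat_eq_neg_logb_sInf]
  exact neg_le_neg (Real.logb_le_logb_of_le one_lt_two hpos hle)

end CondMinEntropy

section CQState

variable {A J : Type} [Fintype J] [DecidableEq J]

def cqState (q : J → ℝ) (ρ : J → Matrix A A ℂ) : Matrix (A × J) (A × J) ℂ :=
  ∑ j, q j • (ρ j ⊗ₖ single j j (1 : ℂ))

lemma trace_cqState [Fintype A] {q : J → ℝ} (hq : IsProbDist q) {ρ : J → Matrix A A ℂ}
    (hρtr : ∀ j, (ρ j).trace = 1) : (cqState q ρ).trace = 1 := by
  simp [cqState, trace_sum, trace_smul, trace_kronecker, hρtr, ← Complex.ofReal_sum, hq.2]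

lemma smul_one_kronecker_diagonal_sub_cqState [DecidableEq A] (q : J → ℝ)
    (ρ : J → Matrix A A ℂ) (l : ℝ) :
    l • ((1 : Matrix A A ℂ) ⊗ₖ diagonal (fun j => (q j : ℂ))) - cqState q ρ
      = ∑ j, q j • ((l • (1 : Matrix A A ℂ) - ρ j) ⊗ₖ single j j (1 : ℂ)) := by
  ext ⟨a, b⟩ ⟨c, d⟩
  rcases eq_or_ne b d with rfl | hbd
  · by_cases hac : a = c <;>
    · simp [cqState, Matrix.sum_apply, single_apply, one_apply, hac, Complex.real_smul] <;> ring
  · have hoff (j : J) : ¬(j = b ∧ j = d) := fun h => hbd (h.1 ▸ h.2)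
    simp [cqState, Matrix.sum_apply, hbd, hoff]

lemma mem_condHminFeasible_cqState [Fintype A] [DecidableEq A] {q : J → ℝ} (hq : IsProbDist q)
    {ρ : J → Matrix A A ℂ} (hρ : ∀ j, (ρ j).PosSemidef) {l : ℝ} (hl0 : 0 ≤ l)
    (hl : ∀ j i, (hρ j).isHermitian.eigenvalues i ≤ l) :
    l ∈ condHminFeasible (cqState q ρ) := by
  refine ⟨hl0, diagonal (fun j => (q j : ℂ)), .diagonal fun j => Complex.zero_le_real.2 (hq.1 j),
    ?_, ?_⟩
  · simp [trace_diagonal, ← Complex.ofReal_sum, hq.2]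
  · rw [smul_one_kronecker_diagonal_sub_cqState]
    refine posSemidef_sum _ fun j _ => .smul (.kronecker ?_ (posSemidef_single_one j)) (hq.1 j)
    exact (hρ j).isHermitian.posSemidef_smul_one_sub (hl j)

end CQState

/-- for a classical-quantum state `ρ^{AB} = ∑_j q_j · ρ_j ⊗ |j⟩⟨j|`,
the conditional min-entropy satisfies `H_min(A|B) ≥ min_j H_min(ρ_j)`, where
`H_min(ρ_j) = −log` of the largest eigenvalue of `ρ_j`. -/
theorem cond_min_entropy_cq_state
    {DA : ℕ} {J : Type} [Fintype J] [DecidableEq J]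
    (q : J → ℝ) (hq : IsProbDist q)
    (ρ : J → Matrix (Fin DA) (Fin DA) ℂ)
    (hρ : ∀ j, (ρ j).PosSemidef) (hρtr : ∀ j, (ρ j).trace = 1) :
    condHminMat (∑ j, q j • (ρ j ⊗ₖ Matrix.single j j (1 : ℂ)))
    ≥ ⨅ j, - Real.logb 2 (⨆ i, (hρ j).isHermitian.eigenvalues i) := by
  have := hq.nonempty
  set maxEig := fun j => ⨆ i, (hρ j).isHermitian.eigenvalues i
  obtain ⟨j₀, hj₀⟩ := Finite.exists_max maxEig
  have hfeas : maxEig j₀ ∈ condHminFeasible (cqState q ρ) :=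
    mem_condHminFeasible_cqState hq hρ (Real.iSup_nonneg (hρ j₀).eigenvalues_nonneg)
      fun j i => (le_ciSup (Finite.bddAbove_range _) i).trans (hj₀ j)
  calc ⨅ j, -Real.logb 2 (maxEig j) ≤ -Real.logb 2 (maxEig j₀) :=
        ciInf_le (Finite.bddBelow_range _) j₀
    _ ≤ condHminMat (cqState q ρ) := neg_logb_le_condHminMat (trace_cqState hq hρtr) hfeas

end
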